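/- In the setting above, suppose the outcome regression model η̃_j is arbitrary (possibly misspecified) but the mediator density κ is correct. Define ψ̃_θ as ψ_θ but with η_j replaced by η̃_j everywhere, including in ũ_j^(1)(a, a*, c, n) = Σ_m η̃_j(a, m, c, n) κ(a*, m, c, n). Then E[ψ̃_θ(a, a*; O)] = θ_C(a, a*). -/
import Mathlib

open Finset

open scoped Classical in
noncomputable def Pr {Ω : Type*} [Fintype Ω] (p : Ω → ℝ) (E : Ω → Prop) : ℝ :=
  ∑ ω, if E ω then p ω else 0

noncomputable def EV {Ω : Type*} [Fintype Ω] (p : Ω → ℝ) (X : Ω → ℝ) : ℝ :=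
  ∑ ω, p ω * X ω

noncomputable def cPr {Ω : Type*} [Fintype Ω] (p : Ω → ℝ) (E F : Ω → Prop) : ℝ :=
  Pr p (fun ω => E ω ∧ F ω) / Pr p F

open scoped Classical in
noncomputable def cEV {Ω : Type*} [Fintype Ω] (p : Ω → ℝ) (X : Ω → ℝ) (F : Ω → Prop) : ℝ :=
  (∑ ω, if F ω then p ω * X ω else 0) / Pr p F

section helpers
open scoped Classical
variable {Ω : Type*} [Fintype Ω]

lemma Pr_congr (p : Ω → ℝ) {E F : Ω → Prop} (h : ∀ ω, E ω ↔ F ω) :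
    Pr p E = Pr p F := by
  unfold Pr
  exact Finset.sum_congr rfl fun ω _ => by
    simp only [h ω]

lemma Pr_nonneg (p : Ω → ℝ) (hp : ∀ ω, 0 ≤ p ω) (E : Ω → Prop) : 0 ≤ Pr p E := by
  unfold Pr
  exact Finset.sum_nonneg fun ω _ => by split <;> simp [hp ω]

lemma p_zero_of_Pr_zero (p : Ω → ℝ) (hp : ∀ ω, 0 ≤ p ω) {E : Ω → Prop}
    (h : Pr p E = 0) {ω : Ω} (hω : E ω) : p ω = 0 := by
  unfold Pr at h
  have h0 : ∀ x ∈ Finset.univ, (0:ℝ) ≤ if E x then p x else 0 := fun x _ => by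
    split <;> simp [hp x]
  have := (Finset.sum_eq_zero_iff_of_nonneg h0).mp h ω (Finset.mem_univ ω)
  simpa [hω] using this

lemma group_by_M {𝓜 : Type*} [Fintype 𝓜] (M : Ω → 𝓜)
    (E : Ω → Prop) [DecidablePred E] (g : 𝓜 → Ω → ℝ) :
    (∑ ω, if E ω then g (M ω) ω else 0)
      = ∑ m, ∑ ω, if M ω = m ∧ E ω then g m ω else 0 := by
  have h1 : ∀ ω, (if E ω then g (M ω) ω else 0)
      = ∑ m, if M ω = m ∧ E ω then g m ω else 0 := by
    intro ω
    by_cases hE : E ω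
    · simp [hE, Finset.sum_ite_eq]
    · simp [hE]
  rw [Finset.sum_congr rfl fun ω _ => h1 ω]
  exact Finset.sum_comm

lemma sum_ite_mul_const (p : Ω → ℝ) (E : Ω → Prop) [DecidablePred E] (r : ℝ) :
    (∑ ω, if E ω then p ω * r else 0) = Pr p E * r := by
  unfold Pr
  rw [Finset.sum_mul]
  exact Finset.sum_congr rfl fun ω _ => by by_cases h : E ω <;> simp [h]

lemma sum_ite_p_eq_Pr (p : Ω → ℝ) (E : Ω → Prop) [DecidablePred E] :
    (∑ ω, if E ω then p ω else 0) = Pr p E := by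
  unfold Pr
  exact Finset.sum_congr rfl fun ω _ => by by_cases h : E ω <;> simp [h]

lemma fiber_reduce (p : Ω → ℝ) (P : Ω → Prop) [DecidablePred P] (n : ℕ) (T : Ω → ℕ → ℝ) :
    (∑ ω ∈ Finset.univ.filter P,
        p ω * ((1/(n : ℝ)) * ∑ j ∈ Finset.range n, T ω j))
      = (1/(n:ℝ)) * ∑ j ∈ Finset.range n,
          ∑ ω, if P ω then p ω * T ω j else 0 := by
  rw [Finset.sum_filter]
  have h1 : ∀ ω, (if P ω then p ω * ((1/(n:ℝ)) * ∑ j ∈ Finset.range n, T ω j) else 0)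
      = ∑ j ∈ Finset.range n, (1/(n:ℝ)) * (if P ω then p ω * T ω j else 0) := by
    intro ω
    by_cases hP : P ω
    · simp only [hP, if_true, Finset.mul_sum]
      exact Finset.sum_congr rfl fun j _ => by ring
    · simp [hP]
  rw [Finset.sum_congr rfl fun ω _ => h1 ω, Finset.sum_comm, Finset.mul_sum]
  exact Finset.sum_congr rfl fun j _ => (Finset.mul_sum _ _ _).symm

lemma sum_split3 (p : Ω → ℝ) (P : Ω → Prop) [DecidablePred P] (f g h : Ω → ℝ) :
    (∑ ω, if P ω then p ω * (f ω + g ω + h ω) else 0)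
      = (∑ ω, if P ω then p ω * f ω else 0) + (∑ ω, if P ω then p ω * g ω else 0)
        + (∑ ω, if P ω then p ω * h ω else 0) := by
  rw [← Finset.sum_add_distrib, ← Finset.sum_add_distrib]
  exact Finset.sum_congr rfl fun ω _ => by by_cases hP : P ω <;> simp [hP, mul_add]

end helpers

/-- Double robustness of the EIF-based estimator with respect to the outcome
regression: if the mediator density κ is correct, the EIF functional with an
arbitrary (possibly misspecified) outcome regression η̃ still has mean θ_C(a,a*). -/
theorem eif_theta_robust_outcome
    {Ω 𝓜 𝓒 : Type*} [Fintype Ω] [Fintype 𝓜] [Fintype 𝓒]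
    (p : Ω → ℝ) (hp : ∀ ω, 0 ≤ p ω) (hp1 : ∑ ω, p ω = 1)
    (N : Ω → ℕ) (hN : ∀ ω, 0 < N ω)
    (C : Ω → 𝓒) (A : Ω → Fin 2) (M : Ω → 𝓜) (Y : Ω → ℕ → ℝ)
    (π : ℝ) (hπ : 0 < π ∧ π < 1) (hA : Pr p (fun ω => A ω = 1) = π)
    (hindep : ∀ (a : Fin 2) (n : ℕ) (c : 𝓒),
      Pr p (fun ω => A ω = a ∧ N ω = n ∧ C ω = c) =
        Pr p (fun ω => A ω = a) * Pr p (fun ω => N ω = n ∧ C ω = c))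
    (hpos : ∀ (a : Fin 2) (m : 𝓜) (c : 𝓒) (n : ℕ),
      0 < Pr p (fun ω => N ω = n ∧ C ω = c) →
      0 < Pr p (fun ω => A ω = a ∧ M ω = m ∧ C ω = c ∧ N ω = n))
    (η : ℕ → Fin 2 → 𝓜 → 𝓒 → ℕ → ℝ)
    (hη : ∀ j a m c n, η j a m c n =
      cEV p (fun ω => Y ω j) (fun ω => A ω = a ∧ M ω = m ∧ C ω = c ∧ N ω = n))
    (κ : Fin 2 → 𝓜 → 𝓒 → ℕ → ℝ)
    (hκ : ∀ a m c n, κ a m c n =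
      cPr p (fun ω => M ω = m) (fun ω => A ω = a ∧ C ω = c ∧ N ω = n))
    -- arbitrary, possibly misspecified, outcome regression model
    (ηt : ℕ → Fin 2 → 𝓜 → 𝓒 → ℕ → ℝ)
    (u1t : ℕ → Fin 2 → Fin 2 → 𝓒 → ℕ → ℝ)
    (hu1t : ∀ j a astar c n, u1t j a astar c n =
      ∑ m : 𝓜, ηt j a m c n * κ astar m c n)
    (a astar : Fin 2) (θC : ℝ)
    (hθ : θC = EV p (fun ω => (1 / (N ω : ℝ)) *
      ∑ j ∈ Finset.range (N ω), ∑ m : 𝓜,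
        η j a m (C ω) (N ω) * κ astar m (C ω) (N ω))) :
    EV p (fun ω => (1 / (N ω : ℝ)) * ∑ j ∈ Finset.range (N ω),
      ((if A ω = a then (1:ℝ) else 0) /
          (π ^ (a : ℕ) * (1 - π) ^ (1 - (a : ℕ))) *
          (κ astar (M ω) (C ω) (N ω) / κ a (M ω) (C ω) (N ω)) *
          (Y ω j - ηt j a (M ω) (C ω) (N ω)) +
        (if A ω = astar then (1:ℝ) else 0) /
          (π ^ (astar : ℕ) * (1 - π) ^ (1 - (astar : ℕ))) *
          (ηt j a (M ω) (C ω) (N ω) - u1t j a astar (C ω) (N ω)) +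
        u1t j a astar (C ω) (N ω))) = θC := by
  classical
  obtain ⟨hπ0, hπ1⟩ := hπ
  have hπ1' : (0:ℝ) < 1 - π := by linarith
  have hfin2 : ∀ b : Fin 2, b = 0 ∨ b = 1 := by decide
  have hPaPos : ∀ b : Fin 2, 0 < π ^ (b:ℕ) * (1-π) ^ (1-(b:ℕ)) := by
    intro b
    rcases hfin2 b with h | h <;> subst h <;> positivity
  have hA0 : Pr p (fun ω => A ω = 0) = 1 - π := by
    have hsum : Pr p (fun ω => A ω = 0) + Pr p (fun ω => A ω = 1) = 1 := by
      unfold Pr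
      rw [← Finset.sum_add_distrib, ← hp1]
      refine Finset.sum_congr rfl fun ω _ => ?_
      rcases hfin2 (A ω) with h | h <;> simp [h]
    rw [hA] at hsum; linarith
  have hPrA : ∀ b : Fin 2, Pr p (fun ω => A ω = b) = π ^ (b:ℕ) * (1-π) ^ (1-(b:ℕ)) := by
    intro b
    rcases hfin2 b with h | h <;> subst h <;> simp [hA0, hA]
  subst hθ
  unfold EV
  have hmaps : ∀ x ∈ (Finset.univ : Finset Ω),
      (fun ω => (N ω, C ω)) x ∈ Finset.image (fun ω => (N ω, C ω)) Finset.univ :=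
    fun x _ => Finset.mem_image_of_mem _ (Finset.mem_univ x)
  rw [← Finset.sum_fiberwise_of_maps_to hmaps, ← Finset.sum_fiberwise_of_maps_to hmaps]
  refine Finset.sum_congr rfl ?_
  rintro ⟨n, c⟩ hy
  have hsub : ∀ ω ∈ Finset.univ.filter (fun ω => (N ω, C ω) = ((n, c) : ℕ × 𝓒)),
      N ω = n ∧ C ω = c := by
    intro ω hω
    have h := (Finset.mem_filter.mp hω).2
    exact ⟨congrArg Prod.fst h, congrArg Prod.snd h⟩
  by_cases hq0 : Pr p (fun ω => N ω = n ∧ C ω = c) = 0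
  · refine Eq.trans (Finset.sum_eq_zero ?_) (Finset.sum_eq_zero ?_).symm <;>
    · intro ω hω
      have hz : p ω = 0 := p_zero_of_Pr_zero p hp hq0 (hsub ω hω)
      rw [hz, zero_mul]
  have hq : 0 < Pr p (fun ω => N ω = n ∧ C ω = c) :=
    lt_of_le_of_ne (Pr_nonneg p hp _) (Ne.symm hq0)
  set q := Pr p (fun ω => N ω = n ∧ C ω = c) with hqdef
  -- key probability facts
  have hANC : ∀ b : Fin 2, Pr p (fun ω => A ω = b ∧ C ω = c ∧ N ω = n)
      = (π ^ (b:ℕ) * (1-π) ^ (1-(b:ℕ))) * q := by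
    intro b
    have h1 : Pr p (fun ω => A ω = b ∧ C ω = c ∧ N ω = n)
        = Pr p (fun ω => A ω = b ∧ N ω = n ∧ C ω = c) :=
      Pr_congr p fun ω => by tauto
    rw [h1, hindep b n c, hPrA b, hqdef]
  have hAMCN : ∀ (b : Fin 2) (m : 𝓜),
      Pr p (fun ω => A ω = b ∧ M ω = m ∧ C ω = c ∧ N ω = n)
        = κ b m c n * ((π ^ (b:ℕ) * (1-π) ^ (1-(b:ℕ))) * q) := by
    intro b m
    have hden : 0 < Pr p (fun ω => A ω = b ∧ C ω = c ∧ N ω = n) := by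
      rw [hANC b]; exact mul_pos (hPaPos b) hq
    have h1 : Pr p (fun ω => A ω = b ∧ M ω = m ∧ C ω = c ∧ N ω = n)
        = Pr p (fun ω => M ω = m ∧ (A ω = b ∧ C ω = c ∧ N ω = n)) :=
      Pr_congr p fun ω => by tauto
    rw [h1, ← hANC b, hκ b m c n]
    unfold cPr
    exact (div_mul_cancel₀ _ (ne_of_gt hden)).symm
  have hκa : ∀ m : 𝓜, 0 < κ a m c n := by
    intro m
    have h2 := hpos a m c n hq
    rw [hAMCN a m] at h2
    nlinarith [mul_pos (hPaPos a) hq]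
  have hκsum : ∀ b : Fin 2, (∑ m : 𝓜, κ b m c n) = 1 := by
    intro b
    have key : (∑ m : 𝓜, Pr p (fun ω => M ω = m ∧ (A ω = b ∧ C ω = c ∧ N ω = n)))
        = Pr p (fun ω => A ω = b ∧ C ω = c ∧ N ω = n) := by
      unfold Pr
      rw [Finset.sum_comm]
      refine Finset.sum_congr rfl fun ω _ => ?_
      by_cases h : A ω = b ∧ C ω = c ∧ N ω = n
      · simp [h, Finset.sum_ite_eq]
      · simp [h]
    have h3 : (∑ m : 𝓜, κ b m c n) * ((π ^ (b:ℕ) * (1-π) ^ (1-(b:ℕ))) * q)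
        = 1 * ((π ^ (b:ℕ) * (1-π) ^ (1-(b:ℕ))) * q) := by
      rw [Finset.sum_mul, one_mul]
      calc (∑ m : 𝓜, κ b m c n * ((π ^ (b:ℕ) * (1-π) ^ (1-(b:ℕ))) * q))
          = ∑ m : 𝓜, Pr p (fun ω => M ω = m ∧ (A ω = b ∧ C ω = c ∧ N ω = n)) := by
            refine Finset.sum_congr rfl fun m _ => ?_
            rw [← hAMCN b m]
            exact (Pr_congr p fun ω => by tauto).symm
        _ = Pr p (fun ω => A ω = b ∧ C ω = c ∧ N ω = n) := key
        _ = (π ^ (b:ℕ) * (1-π) ^ (1-(b:ℕ))) * q := hANC b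
    exact mul_right_cancel₀ (ne_of_gt (mul_pos (hPaPos b) hq)) h3
  have hηsum : ∀ (j : ℕ) (m : 𝓜),
      (∑ ω, if A ω = a ∧ M ω = m ∧ C ω = c ∧ N ω = n then p ω * Y ω j else 0)
        = η j a m c n * (κ a m c n * ((π ^ (a:ℕ) * (1-π) ^ (1-(a:ℕ))) * q)) := by
    intro j m
    have hden : Pr p (fun ω => A ω = a ∧ M ω = m ∧ C ω = c ∧ N ω = n) ≠ 0 :=
      ne_of_gt (hpos a m c n hq)
    have h1 : (∑ ω, if A ω = a ∧ M ω = m ∧ C ω = c ∧ N ω = n then p ω * Y ω j else 0)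
        = cEV p (fun ω => Y ω j) (fun ω => A ω = a ∧ M ω = m ∧ C ω = c ∧ N ω = n)
          * Pr p (fun ω => A ω = a ∧ M ω = m ∧ C ω = c ∧ N ω = n) := by
      unfold cEV
      rw [div_mul_cancel₀ _ hden]
      exact Finset.sum_congr rfl fun ω _ => by
        by_cases h : A ω = a ∧ M ω = m ∧ C ω = c ∧ N ω = n <;> simp [h]
    rw [h1, ← hη, hAMCN a m]
  -- substitute N ω = n, C ω = c inside the fiber sums
  have hL : (∑ ω ∈ Finset.univ.filter (fun ω => (N ω, C ω) = ((n, c) : ℕ × 𝓒)),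
        p ω * ((1 / (N ω : ℝ)) * ∑ j ∈ Finset.range (N ω),
          ((if A ω = a then (1:ℝ) else 0) /
              (π ^ (a : ℕ) * (1 - π) ^ (1 - (a : ℕ))) *
              (κ astar (M ω) (C ω) (N ω) / κ a (M ω) (C ω) (N ω)) *
              (Y ω j - ηt j a (M ω) (C ω) (N ω)) +
            (if A ω = astar then (1:ℝ) else 0) /
              (π ^ (astar : ℕ) * (1 - π) ^ (1 - (astar : ℕ))) *
              (ηt j a (M ω) (C ω) (N ω) - u1t j a astar (C ω) (N ω)) +
            u1t j a astar (C ω) (N ω))))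
      = ∑ ω ∈ Finset.univ.filter (fun ω => (N ω, C ω) = ((n, c) : ℕ × 𝓒)),
        p ω * ((1 / (n : ℝ)) * ∑ j ∈ Finset.range n,
          ((if A ω = a then (1:ℝ) else 0) /
              (π ^ (a : ℕ) * (1 - π) ^ (1 - (a : ℕ))) *
              (κ astar (M ω) c n / κ a (M ω) c n) *
              (Y ω j - ηt j a (M ω) c n) +
            (if A ω = astar then (1:ℝ) else 0) /
              (π ^ (astar : ℕ) * (1 - π) ^ (1 - (astar : ℕ))) *
              (ηt j a (M ω) c n - u1t j a astar c n) +
            u1t j a astar c n)) := by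
    refine Finset.sum_congr rfl fun ω hω => ?_
    obtain ⟨h1, h2⟩ := hsub ω hω
    rw [h1, h2]
  have hR : (∑ ω ∈ Finset.univ.filter (fun ω => (N ω, C ω) = ((n, c) : ℕ × 𝓒)),
        p ω * ((1 / (N ω : ℝ)) * ∑ j ∈ Finset.range (N ω), ∑ m : 𝓜,
          η j a m (C ω) (N ω) * κ astar m (C ω) (N ω)))
      = ∑ ω ∈ Finset.univ.filter (fun ω => (N ω, C ω) = ((n, c) : ℕ × 𝓒)),
        p ω * ((1 / (n : ℝ)) * ∑ j ∈ Finset.range n, ∑ m : 𝓜,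
          η j a m c n * κ astar m c n) := by
    refine Finset.sum_congr rfl fun ω hω => ?_
    obtain ⟨h1, h2⟩ := hsub ω hω
    rw [h1, h2]
  rw [hL, hR, fiber_reduce, fiber_reduce]
  refine congrArg _ (Finset.sum_congr rfl fun j _ => ?_)
  -- per-person-index j computation
  have hPrQ : Pr p (fun ω => (N ω, C ω) = ((n, c) : ℕ × 𝓒)) = q := by
    rw [hqdef]
    exact Pr_congr p fun ω => by
      constructor
      · intro h; exact ⟨congrArg Prod.fst h, congrArg Prod.snd h⟩
      · rintro ⟨h1, h2⟩; rw [h1, h2]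
  rw [sum_split3]
  -- the three pieces
  have hSC : (∑ ω, if (N ω, C ω) = ((n, c) : ℕ × 𝓒) then
        p ω * u1t j a astar c n else 0) = q * u1t j a astar c n := by
    rw [sum_ite_mul_const, hPrQ]
  have hSB : (∑ ω, if (N ω, C ω) = ((n, c) : ℕ × 𝓒) then
        p ω * ((if A ω = astar then (1:ℝ) else 0) /
          (π ^ (astar : ℕ) * (1 - π) ^ (1 - (astar : ℕ))) *
          (ηt j a (M ω) c n - u1t j a astar c n)) else 0) = 0 := by
    have e1 : ∀ ω, (if (N ω, C ω) = ((n, c) : ℕ × 𝓒) then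
          p ω * ((if A ω = astar then (1:ℝ) else 0) /
            (π ^ (astar : ℕ) * (1 - π) ^ (1 - (astar : ℕ))) *
            (ηt j a (M ω) c n - u1t j a astar c n)) else 0)
        = (if A ω = astar ∧ C ω = c ∧ N ω = n then
            p ω * ((ηt j a (M ω) c n - u1t j a astar c n) /
              (π ^ (astar : ℕ) * (1 - π) ^ (1 - (astar : ℕ)))) else 0) := by
      intro ω
      by_cases h1 : A ω = astar <;> by_cases h2 : (N ω, C ω) = ((n, c) : ℕ × 𝓒)
      · have h2' : N ω = n ∧ C ω = c := ⟨congrArg Prod.fst h2, congrArg Prod.snd h2⟩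
        rw [if_pos h2,
          if_pos (show A ω = astar ∧ C ω = c ∧ N ω = n from ⟨h1, h2'.2, h2'.1⟩),
          if_pos h1]
        ring
      · rw [if_neg h2, if_neg (show ¬(A ω = astar ∧ C ω = c ∧ N ω = n) from
          fun h => h2 (by rw [h.2.2, h.2.1]))]
      · have h2' : N ω = n ∧ C ω = c := ⟨congrArg Prod.fst h2, congrArg Prod.snd h2⟩
        rw [if_pos h2,
          if_neg (show ¬(A ω = astar ∧ C ω = c ∧ N ω = n) from fun h => h1 h.1),
          if_neg h1]
        ring
      · rw [if_neg h2, if_neg (show ¬(A ω = astar ∧ C ω = c ∧ N ω = n) from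
          fun h => h2 (by rw [h.2.2, h.2.1]))]
    rw [Finset.sum_congr rfl fun ω _ => e1 ω]
    rw [group_by_M M (fun ω => A ω = astar ∧ C ω = c ∧ N ω = n)
          (fun m ω => p ω * ((ηt j a m c n - u1t j a astar c n) /
            (π ^ (astar : ℕ) * (1 - π) ^ (1 - (astar : ℕ)))))]
    have e2 : ∀ m : 𝓜, (∑ ω, if M ω = m ∧ A ω = astar ∧ C ω = c ∧ N ω = n then
          p ω * ((ηt j a m c n - u1t j a astar c n) /
            (π ^ (astar : ℕ) * (1 - π) ^ (1 - (astar : ℕ)))) else 0)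
        = κ astar m c n * q * (ηt j a m c n - u1t j a astar c n) := by
      intro m
      rw [sum_ite_mul_const]
      rw [Pr_congr p (F := fun ω => A ω = astar ∧ M ω = m ∧ C ω = c ∧ N ω = n)
            (fun ω => by tauto), hAMCN astar m]
      field_simp
    rw [Finset.sum_congr rfl fun m _ => e2 m]
    calc (∑ m : 𝓜, κ astar m c n * q * (ηt j a m c n - u1t j a astar c n))
        = ∑ m : 𝓜, (q * (ηt j a m c n * κ astar m c n)
            - (q * u1t j a astar c n) * κ astar m c n) :=
          Finset.sum_congr rfl fun m _ => by ring
      _ = q * (∑ m : 𝓜, ηt j a m c n * κ astar m c n)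
            - (q * u1t j a astar c n) * ∑ m : 𝓜, κ astar m c n := by
          rw [Finset.sum_sub_distrib]
          simp only [← Finset.mul_sum]
      _ = 0 := by rw [← hu1t, hκsum astar]; ring
  have hSA : (∑ ω, if (N ω, C ω) = ((n, c) : ℕ × 𝓒) then
        p ω * ((if A ω = a then (1:ℝ) else 0) /
          (π ^ (a : ℕ) * (1 - π) ^ (1 - (a : ℕ))) *
          (κ astar (M ω) c n / κ a (M ω) c n) *
          (Y ω j - ηt j a (M ω) c n)) else 0)
      = ∑ m : 𝓜, κ astar m c n * (η j a m c n - ηt j a m c n) * q := by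
    have e1 : ∀ ω, (if (N ω, C ω) = ((n, c) : ℕ × 𝓒) then
          p ω * ((if A ω = a then (1:ℝ) else 0) /
            (π ^ (a : ℕ) * (1 - π) ^ (1 - (a : ℕ))) *
            (κ astar (M ω) c n / κ a (M ω) c n) *
            (Y ω j - ηt j a (M ω) c n)) else 0)
        = (if A ω = a ∧ C ω = c ∧ N ω = n then
            p ω * (κ astar (M ω) c n /
              (κ a (M ω) c n * (π ^ (a : ℕ) * (1 - π) ^ (1 - (a : ℕ)))) *
              (Y ω j - ηt j a (M ω) c n)) else 0) := by
      intro ω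
      by_cases h1 : A ω = a <;> by_cases h2 : (N ω, C ω) = ((n, c) : ℕ × 𝓒)
      · have h2' : N ω = n ∧ C ω = c := ⟨congrArg Prod.fst h2, congrArg Prod.snd h2⟩
        rw [if_pos h2,
          if_pos (show A ω = a ∧ C ω = c ∧ N ω = n from ⟨h1, h2'.2, h2'.1⟩),
          if_pos h1]
        ring
      · rw [if_neg h2, if_neg (show ¬(A ω = a ∧ C ω = c ∧ N ω = n) from
          fun h => h2 (by rw [h.2.2, h.2.1]))]
      · have h2' : N ω = n ∧ C ω = c := ⟨congrArg Prod.fst h2, congrArg Prod.snd h2⟩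
        rw [if_pos h2,
          if_neg (show ¬(A ω = a ∧ C ω = c ∧ N ω = n) from fun h => h1 h.1),
          if_neg h1]
        ring
      · rw [if_neg h2, if_neg (show ¬(A ω = a ∧ C ω = c ∧ N ω = n) from
          fun h => h2 (by rw [h.2.2, h.2.1]))]
    rw [Finset.sum_congr rfl fun ω _ => e1 ω]
    rw [group_by_M M (fun ω => A ω = a ∧ C ω = c ∧ N ω = n)
          (fun m ω => p ω * (κ astar m c n /
            (κ a m c n * (π ^ (a : ℕ) * (1 - π) ^ (1 - (a : ℕ)))) *
            (Y ω j - ηt j a m c n)))]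
    refine Finset.sum_congr rfl fun m _ => ?_
    have e2 : ∀ ω, (if M ω = m ∧ A ω = a ∧ C ω = c ∧ N ω = n then
          p ω * (κ astar m c n /
            (κ a m c n * (π ^ (a : ℕ) * (1 - π) ^ (1 - (a : ℕ)))) *
            (Y ω j - ηt j a m c n)) else 0)
        = (κ astar m c n / (κ a m c n * (π ^ (a : ℕ) * (1 - π) ^ (1 - (a : ℕ))))) *
            (if A ω = a ∧ M ω = m ∧ C ω = c ∧ N ω = n then p ω * Y ω j else 0)
          - (κ astar m c n / (κ a m c n * (π ^ (a : ℕ) * (1 - π) ^ (1 - (a : ℕ))))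
              * ηt j a m c n) *
            (if A ω = a ∧ M ω = m ∧ C ω = c ∧ N ω = n then p ω else 0) := by
      intro ω
      by_cases h : M ω = m ∧ A ω = a ∧ C ω = c ∧ N ω = n
      · have h' : A ω = a ∧ M ω = m ∧ C ω = c ∧ N ω = n := ⟨h.2.1, h.1, h.2.2⟩
        rw [if_pos h, if_pos h', if_pos h']; ring
      · have h' : ¬(A ω = a ∧ M ω = m ∧ C ω = c ∧ N ω = n) :=
          fun h' => h ⟨h'.2.1, h'.1, h'.2.2⟩
        rw [if_neg h, if_neg h', if_neg h']; ring
    rw [Finset.sum_congr rfl fun ω _ => e2 ω, Finset.sum_sub_distrib,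
        ← Finset.mul_sum, ← Finset.mul_sum, hηsum j m, sum_ite_p_eq_Pr, hAMCN a m]
    have hκam := hκa m
    have hPa := hPaPos a
    field_simp
  rw [hSA, hSB, hSC, sum_ite_mul_const, hPrQ]
  rw [hu1t j a astar c n, add_zero]
  simp only [Finset.mul_sum]
  rw [← Finset.sum_add_distrib]
  exact Finset.sum_congr rfl fun m _ => by ring
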